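/- arXiv:math/9810080 — 8 statements merged into one kernel-verified Lean document; each statement's English description precedes it below -/
import Mathlib

section
/- Let X be a topological space. Every union of Λ_s-sets of X is a Λ_s-set, and every union of V_s-sets of X is a V_s-set. -/
open Set

/-- A set is semi-open if it sits between an open set and its closure. -/
def SemiOpen {X : Type*} [TopologicalSpace X] (A : Set X) : Prop :=
  ∃ O : Set X, IsOpen O ∧ O ⊆ A ∧ A ⊆ closure O

/-- A set is semi-closed if its complement is semi-open. -/
def SemiClosed {X : Type*} [TopologicalSpace X] (A : Set X) : Prop :=
  SemiOpen Aᶜ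

/-- The Λ_s-kernel of `B`: the intersection of all semi-open sets containing `B`. -/
def lambdaS {X : Type*} [TopologicalSpace X] (B : Set X) : Set X :=
  ⋂₀ {O : Set X | SemiOpen O ∧ B ⊆ O}

/-- The V_s-kernel of `B`: the union of all semi-closed sets contained in `B`. -/
def vS {X : Type*} [TopologicalSpace X] (B : Set X) : Set X :=
  ⋃₀ {F : Set X | SemiClosed F ∧ F ⊆ B}

/-- `B` is a Λ_s-set if it equals its Λ_s-kernel. -/
def IsLambdaS {X : Type*} [TopologicalSpace X] (B : Set X) : Prop :=
  B = lambdaS B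

/-- `B` is a V_s-set if it equals its V_s-kernel. -/
def IsVS {X : Type*} [TopologicalSpace X] (B : Set X) : Prop :=
  B = vS B

/-- `B` is a g.Λ_s-set if `B^{Λ_s} ⊆ F` whenever `B ⊆ F` and `F` is semi-closed. -/
def IsGLambdaS {X : Type*} [TopologicalSpace X] (B : Set X) : Prop :=
  ∀ F : Set X, SemiClosed F → B ⊆ F → lambdaS B ⊆ F

/-- `B` is a g.V_s-set if its complement is a g.Λ_s-set. -/
def IsGVS {X : Type*} [TopologicalSpace X] (B : Set X) : Prop :=
  IsGLambdaS Bᶜ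

/-- The semi-closure of `B`: the intersection of all semi-closed sets containing `B`. -/
def sCl {X : Type*} [TopologicalSpace X] (B : Set X) : Set X :=
  ⋂₀ {F : Set X | SemiClosed F ∧ B ⊆ F}

/-- `B` is sg-closed if `sCl B ⊆ O` whenever `B ⊆ O` and `O` is semi-open. -/
def SgClosed {X : Type*} [TopologicalSpace X] (B : Set X) : Prop :=
  ∀ O : Set X, SemiOpen O → B ⊆ O → sCl B ⊆ O

lemma semiOpen_iUnion' {X : Type*} [TopologicalSpace X] {ι : Sort*} (f : ι → Set X)
    (hf : ∀ i, SemiOpen (f i)) : SemiOpen (⋃ i, f i) := by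
  choose O hO hO1 hO2 using hf
  exact ⟨⋃ i, O i, isOpen_iUnion hO, iUnion_mono hO1,
    iUnion_subset fun i => (hO2 i).trans (closure_mono (subset_iUnion O i))⟩

theorem sUnion_lambdaS_and_vS {X : Type*} [TopologicalSpace X] :
    (∀ S : Set (Set X), (∀ B ∈ S, IsLambdaS B) → IsLambdaS (⋃₀ S)) ∧
    (∀ S : Set (Set X), (∀ B ∈ S, IsVS B) → IsVS (⋃₀ S)) := by
  constructor
  · intro S hS
    apply subset_antisymm
    · exact fun x hx O hO => hO.2 hx
    · intro x hx
      by_contra hxS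
      have : ∀ B ∈ S, ∃ O : Set X, SemiOpen O ∧ B ⊆ O ∧ x ∉ O := by
        intro B hB
        have hxB : x ∉ lambdaS B := by
          rw [← hS B hB]; exact fun h => hxS ⟨B, hB, h⟩
        simp only [lambdaS, mem_sInter, mem_setOf_eq, not_forall] at hxB
        obtain ⟨O, ⟨h1, h2⟩, h3⟩ := hxB
        exact ⟨O, h1, h2, h3⟩
      choose O hO hBO hxO using this
      have hsemi : SemiOpen (⋃ B : S, O B.1 B.2) :=
        by apply semiOpen_iUnion'; exact fun B => hO B.1 B.2
      have hsub : ⋃₀ S ⊆ ⋃ B : S, O B.1 B.2 := by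
        rintro y ⟨B, hB, hy⟩
        exact mem_iUnion.2 ⟨⟨B, hB⟩, hBO B hB hy⟩
      have := hx _ ⟨hsemi, hsub⟩
      obtain ⟨B, hB⟩ := mem_iUnion.1 this
      exact hxO B.1 B.2 hB
  · intro S hS
    apply subset_antisymm
    · intro x hx
      obtain ⟨B, hB, hxB⟩ := hx
      have : x ∈ vS B := (hS B hB) ▸ hxB
      obtain ⟨F, ⟨hF1, hF2⟩, hxF⟩ := this
      exact ⟨F, ⟨hF1, hF2.trans (subset_sUnion_of_mem hB)⟩, hxF⟩
    · rintro x ⟨F, ⟨_, hF⟩, hxF⟩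
      exact hF hxF
end

section
/- A topological space X is a semi-T₁-space if and only if every subset of X is a Λ_s-set (equivalently, if and only if every subset of X is a V_s-set). -/
open Set

lemma vS_eq_compl_lambdaS {X : Type*} [TopologicalSpace X] (B : Set X) :
    vS B = (lambdaS Bᶜ)ᶜ := by
  ext x
  constructor
  · rintro ⟨F, ⟨hF, hFB⟩, hxF⟩ hx
    exact (hx Fᶜ ⟨hF, compl_subset_compl.mpr hFB⟩) hxF
  · intro hx
    simp only [lambdaS, mem_compl_iff, mem_sInter, mem_setOf_eq, not_forall, Classical.not_imp] at hx
    obtain ⟨O, hO, hxO⟩ := hx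
    exact ⟨Oᶜ, ⟨by simpa [SemiClosed] using hO.1, compl_subset_comm.mpr hO.2⟩, hxO⟩

lemma semiT1_iff_lam {X : Type*} [TopologicalSpace X] :
    (∀ x : X, SemiClosed ({x} : Set X)) ↔ (∀ B : Set X, IsLambdaS B) := by
  constructor
  · intro h B
    apply subset_antisymm
    · intro x hx O hO
      exact hO.2 hx
    · intro x hx
      by_contra hxB
      exact (hx {x}ᶜ ⟨h x, fun y hy hxy => hxB (hxy ▸ hy)⟩) rfl
  · intro h x
    have hB := h ({x}ᶜ)
    have hx : x ∉ lambdaS ({x}ᶜ) := by rw [← hB]; simp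
    simp only [lambdaS, mem_sInter, mem_setOf_eq, not_forall, Classical.not_imp] at hx
    obtain ⟨O, hO, hxO⟩ := hx
    have : O = {x}ᶜ := subset_antisymm
      (fun y hy hyx => hxO (by rwa [show y = x from hyx] at hy)) hO.2
    rw [SemiClosed, ← this]
    exact hO.1

theorem semiT1_iff_all_lambdaS {X : Type*} [TopologicalSpace X] :
    ((∀ x : X, SemiClosed ({x} : Set X)) ↔ (∀ B : Set X, IsLambdaS B)) ∧
    ((∀ x : X, SemiClosed ({x} : Set X)) ↔ (∀ B : Set X, IsVS B)) := by
  refine ⟨semiT1_iff_lam, semiT1_iff_lam.trans ?_⟩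
  constructor
  · intro h B
    have := h Bᶜ
    rw [IsVS, vS_eq_compl_lambdaS, ← this]
    simp
  · intro h B
    have := h Bᶜ
    rw [IsVS, vS_eq_compl_lambdaS, compl_compl] at this
    rw [IsLambdaS, ← compl_inj_iff, this]
end

section
/- Every semi-T₁-space is a semi-R₀-space: if X is a topological space in which every singleton is semi-closed, then every semi-open subset of X is a V_s-set. -/
open Set

theorem semiT1_implies_semiR0 {X : Type*} [TopologicalSpace X]
    (h : ∀ x : X, SemiClosed ({x} : Set X)) :
    ∀ A : Set X, SemiOpen A → IsVS A := by
  intro A _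
  ext x
  constructor
  · intro hx
    exact ⟨{x}, ⟨h x, singleton_subset_iff.mpr hx⟩, rfl⟩
  · rintro ⟨F, ⟨_, hFA⟩, hxF⟩
    exact hFA hxF
end

section
/- For a topological space X the following conditions are equivalent: (1) X is a semi-T₁-space; (2) every preopen (= locally dense) subset of X is a V_s-set; (3) every β-open (= semi-preopen) subset of X is a V_s-set. -/
open Set

theorem semiT1_tfae {X : Type*} [TopologicalSpace X] :
    [(∀ x : X, SemiClosed ({x} : Set X)),
     (∀ A : Set X, A ⊆ interior (closure A) → IsVS A),
     (∀ A : Set X, A ⊆ closure (interior (closure A)) → IsVS A)].TFAE := by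
  tfae_have 1 → 3
  · intro h1 A _
    apply subset_antisymm
    · intro x hx
      exact ⟨{x}, ⟨h1 x, singleton_subset_iff.mpr hx⟩, rfl⟩
    · rintro x ⟨F, ⟨_, hFA⟩, hxF⟩
      exact hFA hxF
  tfae_have 3 → 2
  · intro h3 A hA
    exact h3 A (hA.trans subset_closure)
  tfae_have 2 → 1
  · intro h2 x
    by_cases hx : x ∈ interior (closure ({x} : Set X))
    · have hV := h2 {x} (singleton_subset_iff.mpr hx)
      have hxV : x ∈ vS ({x} : Set X) := hV ▸ rfl
      obtain ⟨F, ⟨hF, hFsub⟩, hxF⟩ := hxV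
      have : F = {x} := subset_antisymm hFsub (singleton_subset_iff.mpr hxF)
      exact this ▸ hF
    · have hempty : interior (closure ({x} : Set X)) = ∅ := by
        by_contra h
        obtain ⟨y, hy⟩ := nonempty_iff_ne_empty.mpr h
        have hyc : y ∈ closure ({x} : Set X) := interior_subset hy
        rcases mem_closure_iff.mp hyc _ isOpen_interior hy with ⟨z, hz, rfl⟩
        exact hx hz
      refine ⟨(closure ({x} : Set X))ᶜ, isOpen_compl_iff.mpr isClosed_closure, ?_, ?_⟩
      · exact compl_subset_compl.mpr subset_closure
      · rw [closure_compl, hempty]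
        simp
  tfae_finish
end

section
/- For a topological space X the following conditions are equivalent: (1) X is a semi-R₀-space; (2) every simply-open subset of X is a V_s-set; (3) every open subset of X is a V_s-set. -/
open Set

lemma vS_subset {X : Type*} [TopologicalSpace X] (A : Set X) : vS A ⊆ A := by
  intro x hx
  obtain ⟨F, ⟨_, hFA⟩, hxF⟩ := hx
  exact hFA hxF

lemma isVS_of {X : Type*} [TopologicalSpace X] {A : Set X}
    (h : ∀ x ∈ A, ∃ F : Set X, SemiClosed F ∧ F ⊆ A ∧ x ∈ F) : IsVS A := by
  apply subset_antisymm
  · intro x hx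
    obtain ⟨F, hF, hFA, hxF⟩ := h x hx
    exact ⟨F, ⟨hF, hFA⟩, hxF⟩
  · exact vS_subset A

lemma semiClosed_of_int_cl {X : Type*} [TopologicalSpace X] {F : Set X}
    (h : interior (closure F) ⊆ F) : SemiClosed F := by
  refine ⟨(closure F)ᶜ, isOpen_compl_iff.2 isClosed_closure, ?_, ?_⟩
  · exact compl_subset_compl.2 subset_closure
  · rw [closure_compl]
    exact compl_subset_compl.2 h

lemma singleton_semiClosed {X : Type*} [TopologicalSpace X] {N : Set X} {x : X}
    (hN : interior (closure N) = ∅) (hx : x ∈ N) : SemiClosed {x} := by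
  apply semiClosed_of_int_cl
  have h1 : closure {x} ⊆ closure N := closure_mono (Set.singleton_subset_iff.2 hx)
  have : interior (closure ({x} : Set X)) ⊆ interior (closure N) := interior_mono h1
  rw [hN] at this
  exact this.trans (Set.empty_subset _)

lemma frontier_nd {X : Type*} [TopologicalSpace X] {O : Set X} (hO : IsOpen O) :
    interior (closure (closure O \ O)) = ∅ := by
  have hclosed : IsClosed (closure O \ O) := isClosed_closure.sdiff hO
  rw [hclosed.closure_eq]
  by_contra h
  obtain ⟨y, hy⟩ := Set.nonempty_iff_ne_empty.2 h
  have hyc : y ∈ closure O := (interior_subset hy).1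
  have : (interior (closure O \ O) ∩ O).Nonempty := by
    have := mem_closure_iff.1 hyc _ isOpen_interior hy
    exact this
  obtain ⟨z, hz1, hz2⟩ := this
  exact (interior_subset hz1).2 hz2

theorem semiR0_tfae {X : Type*} [TopologicalSpace X] :
    [(∀ A : Set X, SemiOpen A → IsVS A),
     (∀ A : Set X, (∃ U N : Set X, IsOpen U ∧ interior (closure N) = ∅ ∧ A = U ∪ N) → IsVS A),
     (∀ A : Set X, IsOpen A → IsVS A)].TFAE := by
  tfae_have 1 → 3
  | h, A, hA => h A ⟨A, hA, subset_rfl, subset_closure⟩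
  tfae_have 3 → 2
  | h => by
    intro A ⟨U, N, hU, hN, hA⟩
    apply isVS_of
    intro x hx
    rw [hA] at hx
    rcases hx with hx | hx
    · have hVS := h U hU
      have : x ∈ vS U := hVS ▸ hx
      obtain ⟨F, ⟨hF, hFU⟩, hxF⟩ := this
      exact ⟨F, hF, hFU.trans (hA ▸ Set.subset_union_left), hxF⟩
    · exact ⟨{x}, singleton_semiClosed hN hx, by
        rw [hA]; exact (Set.singleton_subset_iff.2 hx).trans Set.subset_union_right,
        rfl⟩
  tfae_have 2 → 3
  | h, A, hA => h A ⟨A, ∅, hA, by simp, by simp⟩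
  tfae_have 3 → 1
  | h => by
    intro A ⟨O, hO, hOA, hAcl⟩
    apply isVS_of
    intro x hx
    by_cases hxO : x ∈ O
    · have hVS := h O hO
      have : x ∈ vS O := hVS ▸ hxO
      obtain ⟨F, ⟨hF, hFO⟩, hxF⟩ := this
      exact ⟨F, hF, hFO.trans hOA, hxF⟩
    · refine ⟨{x}, singleton_semiClosed (frontier_nd hO) ⟨hAcl hx, hxO⟩,
        Set.singleton_subset_iff.2 hx, rfl⟩
  tfae_finish
end

section
/- Let X be a topological space. For each point x ∈ X, either the singleton {x} is semi-open or its complement {x}ᶜ is a g.Λ_s-set of X (equivalently: either {x} is semi-open or {x} is a g.V_s-set of X). -/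
open Set

theorem singleton_semiOpen_or_gLambdaS {X : Type*} [TopologicalSpace X] (x : X) :
    (SemiOpen ({x} : Set X) ∨ IsGLambdaS ({x}ᶜ : Set X)) ∧
    (SemiOpen ({x} : Set X) ∨ IsGVS ({x} : Set X)) := by
  have h : SemiOpen ({x} : Set X) ∨ IsGLambdaS ({x}ᶜ : Set X) := by
    by_cases hs : SemiOpen ({x} : Set X)
    · exact Or.inl hs
    · right
      intro F hF hBF
      have hFc : Fᶜ ⊆ ({x} : Set X) := by
        rw [← compl_compl ({x} : Set X)]
        exact compl_subset_compl.mpr hBF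
      have : Fᶜ = (∅ : Set X) := by
        rcases subset_singleton_iff_eq.mp hFc with h | h
        · exact h
        · exact absurd (h ▸ hF) hs
      have hF_univ : F = univ := by
        rw [← compl_compl F, this, compl_empty]
      rw [hF_univ]
      exact subset_univ _
  exact ⟨h, h⟩
end

section
/- Let X be a topological space, and let A and B be subsets of X. If A is a g.Λ_s-set and A ⊆ B ⊆ A^{Λ_s}, then B is a g.Λ_s-set. -/
open Set

theorem gLambdaS_of_between {X : Type*} [TopologicalSpace X] {A B : Set X}
    (hA : IsGLambdaS A) (hAB : A ⊆ B) (hBA : B ⊆ lambdaS A) : IsGLambdaS B := by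
  intro F hF hBF
  have h1 : lambdaS B ⊆ lambdaS A := by
    intro x hx O hO
    exact hx O ⟨hO.1, fun y hy => hBA hy O hO⟩
  exact h1.trans (hA F hF (hAB.trans hBF))
end

section
/- A topological space X is a semi-T_{1/2}-space if and only if every g.V_s-set of X is a V_s-set. -/
open Set

section Aux
variable {X : Type*} [TopologicalSpace X]

lemma semiOpen_sUnion {S : Set (Set X)} (h : ∀ A ∈ S, SemiOpen A) :
    SemiOpen (⋃₀ S) := by
  choose O hO1 hO2 hO3 using h
  refine ⟨⋃ (A : Set X) (hA : A ∈ S), O A hA, isOpen_iUnion fun A => isOpen_iUnion fun hA => hO1 A hA, ?_, ?_⟩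
  · exact iUnion₂_subset fun A hA => (hO2 A hA).trans (subset_sUnion_of_mem hA)
  · intro x hx
    obtain ⟨A, hA, hxA⟩ := hx
    exact closure_mono (subset_iUnion₂ A hA) (hO3 A hA hxA)

lemma semiClosed_sCl (B : Set X) : SemiClosed (sCl B) := by
  show SemiOpen _
  rw [sCl, compl_sInter]
  apply semiOpen_sUnion
  rintro A ⟨F, ⟨hF, _⟩, rfl⟩
  exact hF

lemma subset_sCl (B : Set X) : B ⊆ sCl B :=
  subset_sInter fun F hF => hF.2

lemma sCl_subset {B F : Set X} (hF : SemiClosed F) (hBF : B ⊆ F) : sCl B ⊆ F :=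
  sInter_subset_of_mem ⟨hF, hBF⟩

lemma semiClosed_compl_of_semiOpen {A : Set X} (h : SemiOpen A) : SemiClosed Aᶜ := by
  rwa [SemiClosed, compl_compl]

/-- If every sg-closed set is semi-closed, every singleton is semi-open or semi-closed. -/
lemma singleton_dichotomy_of_sg (h : ∀ B : Set X, SgClosed B → SemiClosed B) (x : X) :
    SemiOpen {x} ∨ SemiClosed {x} := by
  by_cases hc : SemiClosed {x}
  · exact Or.inr hc
  · left
    have hsg : SgClosed ({x}ᶜ : Set X) := by
      intro O hO hsub
      by_cases hx : x ∈ O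
      · have : O = univ := eq_univ_of_forall fun y => by
          by_cases hy : y = x
          · exact hy ▸ hx
          · exact hsub (by simpa using hy)
        simp [this]
      · have : O = {x}ᶜ := Subset.antisymm (fun y hy => by
          intro hyx
          exact hx (by simpa using hyx ▸ hy)) hsub
        exact absurd (this ▸ hO : SemiOpen ({x}ᶜ : Set X)) hc
    have := h _ hsg
    rwa [SemiClosed, compl_compl] at this

/-- If every g.V_s-set is a V_s-set, every singleton is semi-open or semi-closed. -/
lemma singleton_dichotomy_of_gVS (h : ∀ B : Set X, IsGVS B → IsVS B) (x : X) :
    SemiOpen {x} ∨ SemiClosed {x} := by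
  by_cases ho : SemiOpen ({x} : Set X)
  · exact Or.inl ho
  · right
    have hg : IsGVS ({x} : Set X) := by
      intro F hF hsub
      by_cases hx : x ∈ F
      · have : F = univ := eq_univ_of_forall fun y => by
          by_cases hy : y = x
          · exact hy ▸ hx
          · exact hsub (by simpa using hy)
        simp [this]
      · have hFx : F = {x}ᶜ := Subset.antisymm (fun y hy hyx => hx (by simpa using hyx ▸ hy)) hsub
        have : SemiOpen ({x} : Set X) := by
          have := hF
          rw [hFx, SemiClosed, compl_compl] at this
          exact this
        exact absurd this ho
    have hvs := h _ hg
    have hx : x ∈ vS ({x} : Set X) := hvs ▸ rfl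
    obtain ⟨F, ⟨hFsc, hFsub⟩, hxF⟩ := hx
    have : F = {x} := Subset.antisymm hFsub (by simpa using hxF)
    exact this ▸ hFsc

lemma gVS_to_vS_of_dichotomy (hd : ∀ x : X, SemiOpen {x} ∨ SemiClosed {x})
    (B : Set X) (hB : IsGVS B) : IsVS B := by
  apply Subset.antisymm
  · intro x hx
    rcases hd x with ho | hc
    · have hcc : SemiClosed ({x}ᶜ : Set X) := semiClosed_compl_of_semiOpen ho
      have hsub : Bᶜ ⊆ {x}ᶜ := compl_subset_compl.mpr (singleton_subset_iff.mpr hx)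
      have hlam := hB _ hcc hsub
      have hxnot : x ∉ lambdaS Bᶜ := fun hmem => (hlam hmem) rfl
      rw [lambdaS, mem_sInter] at hxnot
      push_neg at hxnot
      obtain ⟨O, ⟨hOso, hOB⟩, hxO⟩ := hxnot
      exact ⟨Oᶜ, ⟨semiClosed_compl_of_semiOpen hOso, compl_subset_comm.mpr hOB⟩, hxO⟩
    · exact ⟨{x}, ⟨hc, singleton_subset_iff.mpr hx⟩, rfl⟩
  · exact sUnion_subset fun F hF => hF.2

lemma sg_to_semiClosed_of_dichotomy (hd : ∀ x : X, SemiOpen {x} ∨ SemiClosed {x})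
    (B : Set X) (hB : SgClosed B) : SemiClosed B := by
  have hBeq : B = sCl B := by
    apply Subset.antisymm (subset_sCl B)
    intro x hx
    by_contra hxB
    have hsub : B ⊆ {x}ᶜ := fun y hy hyx => hxB (by simpa using hyx ▸ hy)
    rcases hd x with ho | hc
    · exact sCl_subset (semiClosed_compl_of_semiOpen ho) hsub hx rfl
    · exact hB _ hc hsub hx rfl
  exact hBeq ▸ semiClosed_sCl B

end Aux

theorem semiT_half_iff_gVS_eq_vS {X : Type*} [TopologicalSpace X] :
    (∀ B : Set X, SgClosed B → SemiClosed B) ↔ (∀ B : Set X, IsGVS B → IsVS B) := by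
  constructor
  · intro h B hB
    exact gVS_to_vS_of_dichotomy (singleton_dichotomy_of_sg h) B hB
  · intro h B hB
    exact sg_to_semiClosed_of_dichotomy (singleton_dichotomy_of_gVS h) B hB
end
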